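/- arXiv:1307.6896 — 3 statements merged into one kernel-verified Lean document; each statement's English description precedes it below -/
import Mathlib

section
/- Let Γ^op be the category whose objects are the pointed finite sets [n] = {0,1,...,n} and whose morphisms are functions φ : [n] → [m] with φ(0) = 0. For n ≥ 1 let p^n_k : [n] → [1] be the map sending k to 1 and everything else to 0. Then the category of functors A : Γ^op → Set such that for every n the map (A(p^n_1),...,A(p^n_n)) : A([n]) → A([1])^n is a bijection and A([0]) is a singleton, with natural transformations as morphisms, is equivalent to the category of commutative monoids. -/
open CategoryTheory

/-- Segal's category `Γᵒᵖ`: objects are the pointed finite sets `[n] = {0,1,…,n}`,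
morphisms are basepoint-preserving functions. -/
structure GammaOp where
  n : ℕ

instance : Category GammaOp where
  Hom a b := {φ : Fin (a.n + 1) → Fin (b.n + 1) // φ 0 = 0}
  id a := ⟨id, rfl⟩
  comp f g := ⟨g.1 ∘ f.1, by simp [Function.comp, f.2, g.2]⟩

/-- The projection `p^n_k : [n] → [1]` sending `k+1`-st nonbasepoint to `1` and
everything else to `0`. -/
def gammaProj (n : ℕ) (k : Fin n) : (GammaOp.mk n) ⟶ (GammaOp.mk 1) :=
  ⟨fun i => if i = k.succ then 1 else 0, by simp [Fin.ext_iff]⟩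

/-- The strict-algebra condition: `A` sends each structure cone of `Γᵒᵖ` to a product
cone, and sends `[0]` to a singleton. -/
def GammaAlgebra (A : GammaOp ⥤ Type) : Prop :=
  (∀ n : ℕ, Function.Bijective
      (fun (x : A.obj (GammaOp.mk n)) (k : Fin n) => A.map (gammaProj n k) x)) ∧
    (Nonempty (A.obj (GammaOp.mk 0)) ∧ Subsingleton (A.obj (GammaOp.mk 0)))

/-!
Via the Segal bijection `A[n] ≅ A[1]ⁿ`, an algebra `A` is determined by `A[1]`, and the map
`χ_S : [n] → [1]` that is `1` exactly on `S` acts as `x ↦ ∏_{i ∈ S} xᵢ` for the multiplication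
induced by the fold map. Indeed `χ_{insert a S}` factors through the fold map via
`[n] → [2]`, `a ↦ 1`, `S ↦ 2`; splitting `χ_{[2]}` and `χ_{[3]}` in two ways gives commutativity
and associativity, and `[0]` gives the unit. Since `p_k ∘ φ = χ_{φ⁻¹(k)}`, a natural
transformation is the same as a monoid morphism on `A[1]`, so `A ↦ A[1]` is fully faithful;
a commutative monoid `M` comes from `[n] ↦ Mⁿ`, where `φ` multiplies over its fibres.
-/

section fiberProd

variable {α β γ M : Type*} [Fintype α] [Fintype β] [DecidableEq β] [DecidableEq γ] [CommMonoid M]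

def fiberProd (f : α → β) (v : α → M) (b : β) : M := ∏ a with f a = b, v a

lemma fiberProd_id (v : β → M) : fiberProd id v = v := by
  funext b
  simp [fiberProd, Finset.filter_eq']

lemma fiberProd_comp (f : α → β) (g : β → γ) (v : α → M) :
    fiberProd (g ∘ f) v = fiberProd g (fiberProd f v) := by
  funext c
  rw [fiberProd,
    ← Finset.prod_fiberwise_of_maps_to (t := {b | g b = c}) (g := f) (f := v) (by simp)]
  refine Finset.prod_congr rfl fun b hb => Finset.prod_congr ?_ fun _ _ => rfl
  ext a
  simp only [Finset.mem_filter, Finset.mem_univ, true_and] at hb ⊢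
  constructor
  · exact And.right
  · rintro rfl; exact ⟨hb, rfl⟩

end fiberProd

lemma Fin.tail_fiberProd_cons_one_tail {M : Type*} [CommMonoid M] {m k : ℕ}
    {g : Fin (m + 1) → Fin (k + 1)} (hg : g 0 = 0) (w : Fin (m + 1) → M) :
    Fin.tail (fiberProd g (Fin.cons 1 (Fin.tail w) : Fin (m + 1) → M)) =
      Fin.tail (fiberProd g w) := by
  funext j
  simp only [Fin.tail, fiberProd]
  refine Finset.prod_congr rfl fun a ha => ?_
  cases a using Fin.cases with
  | zero => simp only [Finset.mem_filter, hg] at ha; exact absurd ha.2.symm (Fin.succ_ne_zero j)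
  | succ i => rfl

namespace GammaOp

@[simp] lemma comp_val {a b c : GammaOp} (f : a ⟶ b) (g : b ⟶ c) (i : Fin (a.n + 1)) :
    (f ≫ g).1 i = g.1 (f.1 i) := rfl

@[ext] lemma hom_ext {a b : GammaOp} {f g : a ⟶ b} (h : ∀ i : Fin a.n, f.1 i.succ = g.1 i.succ) :
    f = g :=
  Subtype.ext <| funext <| Fin.cases (f.2.trans g.2.symm) h

def homMk {n m : ℕ} (f : Fin n → Fin (m + 1)) : (⟨n⟩ : GammaOp) ⟶ ⟨m⟩ :=
  ⟨Fin.cases 0 f, rfl⟩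

@[simp] lemma homMk_succ {n m : ℕ} (f : Fin n → Fin (m + 1)) (i : Fin n) :
    (homMk f).1 i.succ = f i := rfl

def toZero (n : ℕ) : (⟨n⟩ : GammaOp) ⟶ ⟨0⟩ := ⟨fun _ => 0, rfl⟩

def fromZero (n : ℕ) : (⟨0⟩ : GammaOp) ⟶ ⟨n⟩ := ⟨fun _ => 0, rfl⟩

def indicator {n : ℕ} (S : Finset (Fin n)) : (⟨n⟩ : GammaOp) ⟶ ⟨1⟩ :=
  homMk fun i => if i ∈ S then 1 else 0

def fold : (⟨2⟩ : GammaOp) ⟶ ⟨1⟩ := indicator Finset.univ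

lemma indicator_empty (n : ℕ) : indicator (∅ : Finset (Fin n)) = toZero n ≫ fromZero 1 := by
  ext i; simp [indicator, toZero, fromZero]

lemma indicator_singleton {n : ℕ} (k : Fin n) : indicator {k} = gammaProj n k := by
  ext i; simp [indicator, gammaProj, Fin.succ_inj]

lemma gammaProj_one_zero : gammaProj 1 0 = 𝟙 (⟨1⟩ : GammaOp) := by
  ext i; fin_cases i; rfl

lemma comp_gammaProj {n m : ℕ} (φ : (⟨n⟩ : GammaOp) ⟶ ⟨m⟩) (k : Fin m) :
    φ ≫ gammaProj m k = indicator {i | φ.1 i.succ = k.succ} := by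
  ext i; simp [indicator, gammaProj]

def insertSplit {n : ℕ} (a : Fin n) (S : Finset (Fin n)) : (⟨n⟩ : GammaOp) ⟶ ⟨2⟩ :=
  homMk fun i => if i = a then 1 else if i ∈ S then 2 else 0

lemma insertSplit_fold {n : ℕ} (a : Fin n) (S : Finset (Fin n)) :
    insertSplit a S ≫ fold = indicator (insert a S) := by
  ext i
  by_cases h1 : i = a <;> by_cases h2 : i ∈ S <;>
    simp [insertSplit, fold, indicator, h1, h2] <;> rfl

lemma insertSplit_gammaProj_zero {n : ℕ} (a : Fin n) (S : Finset (Fin n)) :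
    insertSplit a S ≫ gammaProj 2 0 = gammaProj n a := by
  ext i
  by_cases h1 : i = a <;> by_cases h2 : i ∈ S <;>
    simp [insertSplit, gammaProj, Fin.succ_inj, h1, h2]

lemma insertSplit_gammaProj_one {n : ℕ} {a : Fin n} {S : Finset (Fin n)} (ha : a ∉ S) :
    insertSplit a S ≫ gammaProj 2 1 = indicator S := by
  ext i
  by_cases h1 : i = a <;> by_cases h2 : i ∈ S <;>
    simp_all [insertSplit, indicator, gammaProj]

end GammaOp

namespace GammaAlgebra

open GammaOp

variable {A B : GammaOp ⥤ Type} (hA : GammaAlgebra A) (hB : GammaAlgebra B)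

noncomputable def segal (n : ℕ) : A.obj ⟨n⟩ ≃ (Fin n → A.obj ⟨1⟩) :=
  Equiv.ofBijective _ (hA.1 n)

lemma segal_apply {n : ℕ} (x : A.obj ⟨n⟩) (k : Fin n) :
    hA.segal n x k = A.map (gammaProj n k) x := rfl

lemma map_gammaProj_segal_symm {n : ℕ} (v : Fin n → A.obj ⟨1⟩) (k : Fin n) :
    A.map (gammaProj n k) ((hA.segal n).symm v) = v k := by
  rw [← hA.segal_apply, Equiv.apply_symm_apply]

lemma segal_one_apply (x : A.obj ⟨1⟩) (k : Fin 1) : hA.segal 1 x k = x := by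
  rw [segal_apply, Fin.fin_one_eq_zero k, gammaProj_one_zero, Functor.map_id_apply]

lemma segal_one_symm_apply (v : Fin 1 → A.obj ⟨1⟩) : (hA.segal 1).symm v = v 0 := by
  rw [Equiv.symm_apply_eq]
  funext k
  rw [segal_one_apply, Fin.fin_one_eq_zero k]

noncomputable def one : A.obj ⟨1⟩ := A.map (fromZero 1) hA.2.1.some

noncomputable def mul (a b : A.obj ⟨1⟩) : A.obj ⟨1⟩ := A.map fold ((hA.segal 2).symm ![a, b])

lemma map_indicator_empty {n : ℕ} (x : A.obj ⟨n⟩) : A.map (indicator ∅) x = hA.one := by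
  rw [indicator_empty, Functor.map_comp_apply, one]
  exact congrArg _ (hA.2.2.elim _ _)

lemma map_indicator_insert {n : ℕ} {a : Fin n} {S : Finset (Fin n)} (ha : a ∉ S)
    (x : A.obj ⟨n⟩) :
    A.map (indicator (insert a S)) x =
      hA.mul (A.map (gammaProj n a) x) (A.map (indicator S) x) := by
  have hsplit : A.map (insertSplit a S) x
      = (hA.segal 2).symm ![A.map (gammaProj n a) x, A.map (indicator S) x] := by
    rw [Equiv.eq_symm_apply]
    funext k
    rw [segal_apply, ← Functor.map_comp_apply]
    fin_cases k
    · exact congrArg (A.map · x) (insertSplit_gammaProj_zero a S)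
    · exact congrArg (A.map · x) (insertSplit_gammaProj_one ha)
  rw [← insertSplit_fold, Functor.map_comp_apply, hsplit, mul]

lemma map_indicator_pair {n : ℕ} {a b : Fin n} (hab : a ≠ b) (x : A.obj ⟨n⟩) :
    A.map (indicator {a, b}) x = hA.mul (A.map (gammaProj n a) x) (A.map (gammaProj n b) x) := by
  rw [map_indicator_insert hA (by simpa using hab), indicator_singleton]

lemma mul_comm (a b : A.obj ⟨1⟩) : hA.mul a b = hA.mul b a := by
  set x := (hA.segal 2).symm ![a, b]
  have h0 : A.map (gammaProj 2 0) x = a := map_gammaProj_segal_symm hA _ 0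
  have h1 : A.map (gammaProj 2 1) x = b := map_gammaProj_segal_symm hA _ 1
  calc hA.mul a b = A.map (indicator {0, 1}) x := by rw [map_indicator_pair hA (by decide), h0, h1]
    _ = A.map (indicator {1, 0}) x := by rw [Finset.pair_comm]
    _ = hA.mul b a := by rw [map_indicator_pair hA (by decide), h0, h1]

lemma mul_one (a : A.obj ⟨1⟩) : hA.mul a hA.one = a := by
  have h := map_indicator_insert hA (Finset.notMem_empty (0 : Fin 1)) a
  rwa [map_indicator_empty, insert_empty_eq, indicator_singleton, gammaProj_one_zero,
    Functor.map_id_apply, eq_comm] at h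

lemma one_mul (a : A.obj ⟨1⟩) : hA.mul hA.one a = a := by
  rw [mul_comm, mul_one]

lemma mul_assoc (a b c : A.obj ⟨1⟩) : hA.mul (hA.mul a b) c = hA.mul a (hA.mul b c) := by
  set x := (hA.segal 3).symm ![a, b, c]
  have h0 : A.map (gammaProj 3 0) x = a := map_gammaProj_segal_symm hA _ 0
  have h1 : A.map (gammaProj 3 1) x = b := map_gammaProj_segal_symm hA _ 1
  have h2 : A.map (gammaProj 3 2) x = c := map_gammaProj_segal_symm hA _ 2
  calc hA.mul (hA.mul a b) c = hA.mul c (hA.mul a b) := mul_comm hA _ _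
    _ = A.map (indicator (insert 2 {0, 1})) x := by
      rw [map_indicator_insert hA (by decide), map_indicator_pair hA (by decide), h0, h1, h2]
    _ = A.map (indicator (insert 0 {1, 2})) x := by
      rw [show (insert 2 {0, 1} : Finset (Fin 3)) = insert 0 {1, 2} by decide]
    _ = hA.mul a (hA.mul b c) := by
      rw [map_indicator_insert hA (by decide), map_indicator_pair hA (by decide), h0, h1, h2]

@[reducible] noncomputable def commMonoid : CommMonoid (A.obj ⟨1⟩) where
  mul := hA.mul
  one := hA.one
  mul_assoc := hA.mul_assoc
  one_mul := hA.one_mul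
  mul_one := hA.mul_one
  mul_comm := hA.mul_comm

lemma segal_app (η : A ⟶ B) {n : ℕ} (x : A.obj ⟨n⟩) :
    hB.segal n (η.app ⟨n⟩ x) = η.app ⟨1⟩ ∘ hA.segal n x := by
  funext k
  simp only [segal_apply, Function.comp_apply, NatTrans.naturality_apply]

lemma app_segal_symm (η : A ⟶ B) {n : ℕ} (v : Fin n → A.obj ⟨1⟩) :
    η.app ⟨n⟩ ((hA.segal n).symm v) = (hB.segal n).symm (η.app ⟨1⟩ ∘ v) := by
  rw [Equiv.eq_symm_apply, segal_app hA hB, Equiv.apply_symm_apply]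

lemma app_one (η : A ⟶ B) : η.app ⟨1⟩ hA.one = hB.one := by
  rw [one, NatTrans.naturality_apply, one]
  exact congrArg _ (hB.2.2.elim _ _)

lemma app_mul (η : A ⟶ B) (a b : A.obj ⟨1⟩) :
    η.app ⟨1⟩ (hA.mul a b) = hB.mul (η.app ⟨1⟩ a) (η.app ⟨1⟩ b) := by
  rw [mul, NatTrans.naturality_apply, app_segal_symm hA hB, mul]
  congr 2
  funext k
  fin_cases k <;> rfl

noncomputable instance (X : ObjectProperty.FullSubcategory GammaAlgebra) :
    CommMonoid (X.obj.obj ⟨1⟩) :=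
  X.property.commMonoid

section FullSubcategory

variable {X Y : ObjectProperty.FullSubcategory GammaAlgebra}

lemma map_indicator_eq_prod {n : ℕ} (S : Finset (Fin n)) (x : X.obj.obj ⟨n⟩) :
    X.obj.map (indicator S) x = ∏ i ∈ S, X.obj.map (gammaProj n i) x := by
  induction S using Finset.induction_on with
  | empty => exact X.property.map_indicator_empty x
  | insert a S ha ih => rw [Finset.prod_insert ha, ← ih]; exact X.property.map_indicator_insert ha x

lemma segal_map {n m : ℕ} (φ : (⟨n⟩ : GammaOp) ⟶ ⟨m⟩) (x : X.obj.obj ⟨n⟩) (k : Fin m) :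
    X.property.segal m (X.obj.map φ x) k
      = ∏ i with φ.1 i.succ = k.succ, X.property.segal n x i := by
  rw [segal_apply, ← Functor.map_comp_apply, comp_gammaProj, map_indicator_eq_prod]
  rfl

noncomputable def appOneHom (η : X ⟶ Y) : X.obj.obj ⟨1⟩ →* Y.obj.obj ⟨1⟩ where
  toFun := η.hom.app ⟨1⟩
  map_one' := app_one X.property Y.property η.hom
  map_mul' := app_mul X.property Y.property η.hom

noncomputable def segalLift (g : X.obj.obj ⟨1⟩ →* Y.obj.obj ⟨1⟩) : X.obj ⟶ Y.obj where
  app W := TypeCat.ofHom fun x => (Y.property.segal W.n).symm (g ∘ X.property.segal W.n x)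
  naturality W V φ := by
    apply ConcreteCategory.hom_ext
    intro x
    change (Y.property.segal V.n).symm (g ∘ X.property.segal V.n (X.obj.map φ x))
      = Y.obj.map φ ((Y.property.segal W.n).symm (g ∘ X.property.segal W.n x))
    rw [Equiv.symm_apply_eq]
    funext k
    rw [segal_map (X := Y) φ, Function.comp_apply, segal_map φ, map_prod]
    simp only [Equiv.apply_symm_apply, Function.comp_apply]

noncomputable def toCommMonCat : ObjectProperty.FullSubcategory GammaAlgebra ⥤ CommMonCat.{0} where
  obj X := CommMonCat.of (X.obj.obj ⟨1⟩)
  map η := CommMonCat.ofHom (appOneHom η)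

instance : toCommMonCat.Faithful where
  map_injective {X Y} η η' h := by
    apply InducedCategory.hom_ext
    ext ⟨n⟩ x
    apply (Y.property.segal n).injective
    change Y.property.segal n (η.hom.app ⟨n⟩ x) = Y.property.segal n (η'.hom.app ⟨n⟩ x)
    rw [segal_app X.property Y.property, segal_app X.property Y.property]
    exact congrArg (· ∘ _) (funext (ConcreteCategory.congr_hom h))

instance : toCommMonCat.Full where
  map_surjective {X Y} g := by
    refine ⟨⟨segalLift g.hom⟩, ?_⟩
    ext x
    change (Y.property.segal 1).symm (g ∘ X.property.segal 1 x) = g x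
    rw [segal_one_symm_apply]
    exact congrArg g (X.property.segal_one_apply x 0)

end FullSubcategory

section ofCommMonoid

variable (M : Type) [CommMonoid M]

abbrev ofCommMonoid : GammaOp ⥤ Type where
  obj W := Fin W.n → M
  map φ := TypeCat.ofHom fun v => Fin.tail (fiberProd φ.1 (Fin.cons 1 v : _ → M))
  map_id W := by
    refine ConcreteCategory.hom_ext _ _ fun v => ?_
    change Fin.tail (fiberProd id (Fin.cons 1 v : _ → M)) = v
    rw [fiberProd_id, Fin.tail_cons]
  map_comp f g := by
    refine ConcreteCategory.hom_ext _ _ fun v => ?_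
    change Fin.tail (fiberProd (g.1 ∘ f.1) (Fin.cons 1 v : _ → M))
      = Fin.tail (fiberProd g.1 (Fin.cons 1 (Fin.tail (fiberProd f.1 (Fin.cons 1 v : _ → M)))))
    rw [fiberProd_comp, Fin.tail_fiberProd_cons_one_tail g.2]

variable {M}

lemma ofCommMonoid_map_indicator {n : ℕ} (S : Finset (Fin n)) (v : Fin n → M) (z : Fin 1) :
    (ofCommMonoid M).map (indicator S) v z = ∏ i ∈ S, v i := by
  change ∏ a with (indicator S).1 a = z.succ, (Fin.cons 1 v : _ → M) a = _
  rw [Finset.prod_filter, Fin.prod_univ_succ, Fin.fin_one_eq_zero z]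
  simp [indicator, Finset.prod_ite_mem]

lemma ofCommMonoid_map_gammaProj {n : ℕ} (k : Fin n) (v : Fin n → M) :
    (ofCommMonoid M).map (gammaProj n k) v = fun _ => v k := by
  funext z
  rw [← indicator_singleton, ofCommMonoid_map_indicator, Finset.prod_singleton]

lemma gammaAlgebra_ofCommMonoid : GammaAlgebra (ofCommMonoid M) := by
  refine ⟨fun n => ?_, inferInstanceAs (Nonempty (Fin 0 → M)),
    inferInstanceAs (Subsingleton (Fin 0 → M))⟩
  have h : (fun (v : (ofCommMonoid M).obj ⟨n⟩) k => (ofCommMonoid M).map (gammaProj n k) v)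
      = Equiv.piCongrRight fun _ => (Equiv.funUnique (Fin 1) M).symm := by
    funext v k
    exact ofCommMonoid_map_gammaProj k v
  rw [h]
  exact Equiv.bijective _

lemma ofCommMonoid_segal_symm {n : ℕ} (u : Fin n → (ofCommMonoid M).obj ⟨1⟩) :
    (gammaAlgebra_ofCommMonoid.segal n).symm u = (fun k => u k 0 : Fin n → M) := by
  rw [Equiv.symm_apply_eq]
  funext k z
  rw [segal_apply, ofCommMonoid_map_gammaProj, Fin.fin_one_eq_zero z]

lemma ofCommMonoid_mul_apply (v w : Fin 1 → M) :
    gammaAlgebra_ofCommMonoid.mul v w 0 = v 0 * w 0 := by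
  rw [GammaAlgebra.mul, ofCommMonoid_segal_symm, fold, ofCommMonoid_map_indicator,
    Fin.prod_univ_two]
  rfl

variable (M) in
def ofCommMonoidMulEquiv :
    toCommMonCat.obj ⟨ofCommMonoid M, gammaAlgebra_ofCommMonoid⟩ ≃* M :=
  { Equiv.funUnique (Fin 1) M with map_mul' := ofCommMonoid_mul_apply }

instance : toCommMonCat.EssSurj where
  mem_essImage M :=
    ⟨⟨ofCommMonoid M, gammaAlgebra_ofCommMonoid⟩, ⟨(ofCommMonoidMulEquiv M).toCommMonCatIso⟩⟩

end ofCommMonoid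

instance : toCommMonCat.IsEquivalence where

end GammaAlgebra

/-- The category of strict `(Γᵒᵖ, {αⁿ})`-algebras in `Set` is equivalent to the
category of commutative monoids. -/
theorem gammaOp_algebras_equiv_commMonoids :
    Nonempty (ObjectProperty.FullSubcategory GammaAlgebra ≌ CommMonCat.{0}) :=
  ⟨GammaAlgebra.toCommMonCat.asEquivalence⟩
end

section
/- Let J_C : P → C be the inclusion of the initial S-sorted semi-theory P into a free S-sorted semi-theory C (free on a set of generating morphisms containing the projections). Define J_{C*} : sSet^P → sSet^C on objects by (J_{C*}Y)(c) = Y(c) ⊔ ⨆_{φ ∈ G_c} Y(dom φ), where G_c is the set of morphisms φ : c_i → c in C that factor as composites ζ_k ∘ ⋯ ∘ ζ₁ of free generators with ζ₁ not a projection. Then J_{C*} is left adjoint to the restriction functor J_C* : sSet^C → sSet^P. -/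
open CategoryTheory Limits

noncomputable section

variable (S : Type) (gen : List S → List S → Type)

/-- Vertices of the generating quiver of the free `S`-sorted semi-theory `C`:
tuples of sorts. -/
def FObj (_gen : List S → List S → Type) : Type := List S

/-- The generating quiver of `C`: for each tuple the projection edges, together
with a set `gen` of further free generators. -/
instance : Quiver (FObj S gen) where
  Hom x y := ({k : Fin (List.length (x : List S)) // [List.get (x : List S) k] = y}) ⊕ gen x y

/-- Vertices of the generating quiver of the initial semi-theory `P`. -/
def PObjQ : Type := List S

/-- The generating quiver of `P`: only the projection edges. -/
instance : Quiver (PObjQ S) where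
  Hom x y := {k : Fin (List.length (x : List S)) // [List.get (x : List S) k] = y}

/-- The free `S`-sorted semi-theory `C` on the given generators. -/
abbrev FreeC := Paths (FObj S gen)

/-- The initial `S`-sorted semi-theory `P` (freely generated by the projections). -/
abbrev FreeP := Paths (PObjQ S)

/-- The inclusion `J_C : P → C`. -/
def JC : FreeP S ⥤ FreeC S gen :=
  Paths.lift
    { obj := fun l => (Paths.of (FObj S gen)).obj (show FObj S gen from (l : List S))
      map := fun e => ((Paths.of (V := FObj S gen)).map (Sum.inl e)) }

/-- A path in `C` whose first edge (the edge at its source) is not a projection. -/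
def startsGen : ∀ {a b : FObj S gen}, Quiver.Path a b → Prop
  | _, _, .nil => False
  | _, _, .cons .nil e => (match e with | Sum.inl _ => False | Sum.inr _ => True)
  | _, _, .cons (.cons p e') _ => startsGen (Quiver.Path.cons p e')

/-- The set `G_c` of morphisms `φ : c_i → c` of `C` which factor as composites of
generators whose first generator is not a projection. -/
def Gset (c : FObj S gen) : Type :=
  Σ ci : FObj S gen, {p : Quiver.Path ci c // startsGen S gen p}

/-- The restriction functor `J_C^* : sSet^C → sSet^P`. -/
def Jstar : (FreeC S gen ⥤ SSet.{0}) ⥤ (FreeP S ⥤ SSet.{0}) :=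
  (Functor.whiskeringLeft (FreeP S) (FreeC S gen) SSet.{0}).obj (JC S gen)

/-!
`J_{C*}Y` is the pointwise left Kan extension of `Y` along `J_C`. The explicit formula is a
functor on `C`, and the inclusion of `Y(c)` is a natural transformation
`Y ⟶ J_C^*(J_{C*}Y)`. The induced cocone over `J_C ↓ c` is
colimiting: splitting a path at its first non-projection generator shows that every object of
`J_C ↓ c` maps to `id_c` or to some `φ ∈ G_c`, and the legs at these objects are the coproduct
injections.
-/

section Colimit

variable {J C : Type*} [Category J] [Category C]

def isColimitOfIsColimitCofanOfExistsHom {F : J ⥤ C} (s : Cocone F) {I : Type*} (t : I → J)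
    (hs : IsColimit (Cofan.mk s.pt fun i => s.ι.app (t i)))
    (hreach : ∀ j, ∃ i, Nonempty (j ⟶ t i)) : IsColimit s where
  desc s' := Cofan.IsColimit.desc hs fun i => s'.ι.app (t i)
  fac s' j := by
    obtain ⟨i, ⟨f⟩⟩ := hreach j
    rw [← s.w f, Category.assoc]
    exact (F.map f ≫= Cofan.IsColimit.fac hs _ i).trans (s'.w f)
  uniq s' m hm := Cofan.IsColimit.hom_ext hs _ _ fun i =>
    (hm (t i)).trans (Cofan.IsColimit.fac hs (fun i => s'.ι.app (t i)) i).symm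

def isColimitCofanOption {I : Type*} (f : Option I → C) [HasCoproduct (f ∘ some)]
    [HasBinaryCoproducts C] :
    IsColimit (Cofan.mk (f none ⨿ ∐ (f ∘ some))
      (Option.rec coprod.inl fun i => Sigma.ι (f ∘ some) i ≫ coprod.inr)) :=
  Cofan.IsColimit.mk _
    (fun s => coprod.desc (s.inj none) (Sigma.desc (f := f ∘ some) fun i => s.inj (some i)))
    (fun s i => by
      cases i with
      | none => exact coprod.inl_desc _ _
      | some i =>
        exact (Category.assoc _ _ _).trans ((_ ≫= coprod.inr_desc _ _).trans (Sigma.ι_desc _ _)))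
    (fun s m hm => by
      apply coprod.hom_ext
      · exact (hm none).trans (coprod.inl_desc _ _).symm
      · refine Sigma.hom_ext _ _ fun i => ?_
        exact ((Category.assoc _ _ _).symm.trans (hm (some i))).trans
          ((Sigma.ι_desc (f := f ∘ some) (fun i => s.inj (some i)) i).symm.trans
            (_ ≫= coprod.inr_desc _ _).symm))

end Colimit

variable {S gen}

lemma startsGen_cons {a b c : FObj S gen} (p : Quiver.Path a b) (e : b ⟶ c)
    (hp : startsGen S gen p) : startsGen S gen (p.cons e) := by
  cases p with
  | nil => simp [startsGen] at hp
  | cons q e' => simpa [startsGen] using hp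

namespace Gset

def cons {c d : FObj S gen} (g : Gset S gen c) (e : c ⟶ d) : Gset S gen d :=
  ⟨g.1, g.2.1.cons e, startsGen_cons _ _ g.2.2⟩

def ofGen {b c : FObj S gen} (e : gen b c) : Gset S gen c :=
  ⟨b, Quiver.Path.nil.cons (Sum.inr e), by simp [startsGen]⟩

def hom {c : FObj S gen} (g : Gset S gen c) :
    @Quiver.Hom (FreeC S gen) CategoryStruct.toQuiver g.1 c :=
  g.2.1

end Gset

lemma JC_map_toPath {a b : PObjQ S} (k : a ⟶ b) :
    (JC S gen).map ((Paths.of _).map k) = (Paths.of (FObj S gen)).map (Sum.inl k) :=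
  Paths.lift_toPath _ _

lemma JC_map_eq_or_JC_map_comp_hom_eq {a : FreeP S} {c : FObj S gen}
    (p : Quiver.Path (show FObj S gen from a) c) :
    (∃ h : a ⟶ (c : List S), (JC S gen).map h = p) ∨
      ∃ (g : Gset S gen c) (h : a ⟶ (g.1 : List S)), (JC S gen).map h ≫ g.hom = p := by
  induction p with
  | nil => exact Or.inl ⟨𝟙 a, rfl⟩
  | cons q e ih =>
    rcases ih with ⟨h, rfl⟩ | ⟨g, h, rfl⟩
    · rcases e with k | e
      · exact Or.inl ⟨h ≫ (Paths.of (PObjQ S)).map k,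
          ((JC S gen).map_comp _ _).trans (_ ≫= JC_map_toPath k)⟩
      · exact Or.inr ⟨Gset.ofGen e, h, rfl⟩
    · exact Or.inr ⟨g.cons e, h, rfl⟩

section LowerStar

variable {H : Type*} [Category H] [HasCoproducts.{0} H] (Y : FreeP S ⥤ H)

def lowerStarObj (c : FObj S gen) : H :=
  Y.obj (c : List S) ⨿ ∐ fun g : Gset S gen c => Y.obj (g.1 : List S)

def lowerStarMap {b c : FObj S gen} (e : b ⟶ c) : lowerStarObj Y b ⟶ lowerStarObj Y c :=
  coprod.desc
    (match e with
      | .inl k => Y.map ((Paths.of (PObjQ S)).map k) ≫ coprod.inl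
      | .inr e' =>
        Sigma.ι (fun g : Gset S gen c => Y.obj (g.1 : List S)) (Gset.ofGen e') ≫ coprod.inr)
    (Sigma.desc fun g =>
      Sigma.ι (fun g : Gset S gen c => Y.obj (g.1 : List S)) (g.cons e) ≫ coprod.inr)

lemma inl_comp_lowerStarMap_inl {a b : PObjQ S} (k : a ⟶ b) :
    coprod.inl ≫ lowerStarMap (gen := gen) Y (Sum.inl k) =
      Y.map ((Paths.of _).map k) ≫ coprod.inl :=
  coprod.inl_desc _ _

lemma inl_comp_lowerStarMap_inr {b c : FObj S gen} (e : gen b c) :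
    coprod.inl ≫ lowerStarMap Y (Sum.inr e) =
      Sigma.ι (fun g : Gset S gen c => Y.obj (g.1 : List S)) (Gset.ofGen e) ≫ coprod.inr :=
  coprod.inl_desc _ _

lemma ι_inr_comp_lowerStarMap {b c : FObj S gen} (g : Gset S gen b) (e : b ⟶ c) :
    Sigma.ι (fun g : Gset S gen b => Y.obj (g.1 : List S)) g ≫ coprod.inr ≫ lowerStarMap Y e =
      Sigma.ι (fun g : Gset S gen c => Y.obj (g.1 : List S)) (g.cons e) ≫ coprod.inr :=
  (_ ≫= coprod.inr_desc _ _).trans (Sigma.ι_desc _ _)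

def lowerStar : FreeC S gen ⥤ H :=
  Paths.lift { obj := lowerStarObj Y, map := lowerStarMap Y }

lemma lowerStar_map_toPath {b c : FObj S gen} (e : b ⟶ c) :
    (lowerStar Y).map ((Paths.of _).map e) = lowerStarMap Y e :=
  Paths.lift_toPath _ _

lemma lowerStarUnit_naturality {a b : FreeP S} (f : a ⟶ b) :
    Y.map f ≫ coprod.inl = coprod.inl ≫ (lowerStar Y).map ((JC S gen).map f) := by
  induction f using Paths.induction_fixed_source with
  | id =>
    simp only [CategoryTheory.Functor.map_id, Category.id_comp]
    exact (Category.comp_id _).symm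
  | comp p k ih =>
    rw [Functor.map_comp, Functor.map_comp, Functor.map_comp, JC_map_toPath]
    erw [lowerStar_map_toPath]
    -- `FObj`, `PObjQ` and `FreeC` are distinct aliases of `List S`, which blocks `rw` and `simp`
    -- inside these composites, so the equalities are chained by hand.
    exact ((Category.assoc _ _ _).trans (Y.map p ≫= (inl_comp_lowerStarMap_inl Y k).symm)).trans
      (((Category.assoc _ _ _).symm.trans (ih =≫ _)).trans (Category.assoc _ _ _))

def lowerStarUnit : Y ⟶ JC S gen ⋙ lowerStar Y where
  app _ := coprod.inl
  naturality _ _ f := lowerStarUnit_naturality Y f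

lemma inl_comp_lowerStar_map_hom : ∀ {a c : FObj S gen} (p : Quiver.Path a c)
    (hp : startsGen S gen p),
    coprod.inl ≫ (lowerStar Y).map (Gset.hom ⟨a, p, hp⟩) =
      Sigma.ι (fun g : Gset S gen c => Y.obj (g.1 : List S)) ⟨a, p, hp⟩ ≫ coprod.inr
  | _, _, .nil, hp => by simp [startsGen] at hp
  | _, _, .cons .nil (.inl _), hp => by simp [startsGen] at hp
  | _, _, .cons .nil (.inr e), _ =>
    (coprod.inl ≫= Category.id_comp _).trans (inl_comp_lowerStarMap_inr Y e)
  | _, _, .cons (.cons r e') e, hp =>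
    (Category.assoc _ _ _).symm.trans
      ((inl_comp_lowerStar_map_hom (r.cons e') (by simpa [startsGen] using hp) =≫ _).trans
        ((Category.assoc _ _ _).trans (ι_inr_comp_lowerStarMap Y _ e)))

def lowerStarExtension : Functor.LeftExtension (JC S gen) Y :=
  Functor.LeftExtension.mk (lowerStar Y) (lowerStarUnit Y)

variable (S gen) in
def canonicalArrow (c : FreeP S) :
    Option (Gset S gen c) → CostructuredArrow (JC S gen) ((JC S gen).obj c)
  | none => CostructuredArrow.mk (𝟙 ((JC S gen).obj c))
  | some g => CostructuredArrow.mk (C := FreeP S) (S := JC S gen) (Y := g.1) g.hom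

lemma exists_hom_canonicalArrow {c : FreeP S}
    (x : CostructuredArrow (JC S gen) ((JC S gen).obj c)) :
    ∃ i, Nonempty (x ⟶ canonicalArrow S gen c i) := by
  rcases JC_map_eq_or_JC_map_comp_hom_eq (a := x.left) x.hom with ⟨h, hh⟩ | ⟨g, h, hh⟩
  · exact ⟨none, ⟨CostructuredArrow.homMk h ((Category.comp_id _).trans hh)⟩⟩
  · exact ⟨some g, ⟨CostructuredArrow.homMk h hh⟩⟩

def lowerStarExtensionIsPointwiseLeftKanExtensionAt (c : FreeP S) :
    (lowerStarExtension Y).IsPointwiseLeftKanExtensionAt ((JC S gen).obj c) := by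
  refine isColimitOfIsColimitCofanOfExistsHom _ (canonicalArrow S gen c) ?_
    exists_hom_canonicalArrow
  refine (isColimitCofanOption fun i => Y.obj (canonicalArrow S gen c i).left).ofIsoColimit
    (Cofan.ext (Iso.refl (lowerStarObj Y c)) fun i => ?_)
  cases i with
  | none =>
    exact (Category.comp_id _).trans
      ((Category.comp_id _).symm.trans (coprod.inl ≫= ((lowerStar Y).map_id _).symm))
  | some g =>
    exact (Category.comp_id _).trans (inl_comp_lowerStar_map_hom Y g.2.1 g.2.2).symm

end LowerStar

variable (S gen)

/-- The restriction functor `J_C^* : sSet^C → sSet^P` along the inclusion of the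
initial semi-theory `P` into a free semi-theory `C` admits a left adjoint `J_{C*}`
given on objects by `(J_{C*}Y)(c) = Y(c) ⊔ ⨆_{φ ∈ G_c} Y(dom φ)`. -/
theorem jstar_has_explicit_left_adjoint :
    ∃ L : (FreeP S ⥤ SSet.{0}) ⥤ (FreeC S gen ⥤ SSet.{0}),
      Nonempty (L ⊣ Jstar S gen) ∧
      ∀ (Y : FreeP S ⥤ SSet.{0}) (c : FObj S gen),
        Nonempty ((L.obj Y).obj c ≅
          (Y.obj (c : List S)) ⨿ (∐ fun g : Gset S gen c => Y.obj (g.1 : List S))) :=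
  ⟨(JC S gen).lan, ⟨(JC S gen).lanAdjunction SSet.{0}⟩, fun Y c =>
    ⟨(JC S gen).leftKanExtensionObjIsoColimit Y c ≪≫
      (lowerStarExtensionIsPointwiseLeftKanExtensionAt Y c).isoColimit.symm⟩⟩

end
end

section
/- Let C be a free S-sorted semi-theory and let C' be the category with the same objects whose morphisms c_s → c_{s'} into a singleton sort are labeled directed trees built from the free generators of C (with initial edges labeled by projections of the domain, no internal edges labeled by projections, and compatibility of labels at each vertex), with morphisms into a tuple object defined as tuples of tree morphisms and composition given by grafting. Then C', with projections given by the one-edge trees labeled p^s_i, is an S-sorted algebraic theory: for every tuple s = (s₁,...,sₙ), the object c_s is the categorical product of c_{s₁},...,c_{sₙ} in C' with the projections p^s_i. -/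
open CategoryTheory Limits

variable {S : Type} (gen : List S → List S → Type)

/-- Labeled directed trees: the morphisms into a singleton sort of the algebraic
completion of a free `S`-sorted semi-theory with generators `gen`.  A tree from the
tuple `dom` into the sort `s` is either a single initial edge labeled by a
projection of `dom`, or a bottom edge labeled `φ_i` for a generator `φ` together
with subtrees feeding the inputs of `φ` (so that initial edges are projections and
no internal edge is a projection). -/
inductive Tr (dom : List S) : S → Type where
  | proj (k : Fin dom.length) : Tr dom (dom.get k)
  | node {m l' : List S} (φ : gen m l') (i : Fin l'.length)
      (args : ∀ j : Fin m.length, Tr dom (m.get j)) : Tr dom (l'.get i)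

/-- Grafting: substituting trees for the initial (projection) edges of a tree. -/
def subst {b a : List S} : ∀ {s : S},
    Tr gen b s → (∀ k : Fin b.length, Tr gen a (b.get k)) → Tr gen a s
  | _, .proj k, f => f k
  | _, .node φ i args, f => .node φ i (fun j => subst (args j) f)

lemma subst_proj {b : List S} : ∀ {s : S} (t : Tr gen b s),
    subst gen t (fun k => Tr.proj (dom := b) k) = t := by
  intro s t
  induction t with
  | proj k => rfl
  | node φ i args ih =>
    simp only [subst]
    congr 1
    funext j
    exact ih j

lemma subst_subst {a b c : List S} : ∀ {s : S} (t : Tr gen c s)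
    (g : ∀ k : Fin c.length, Tr gen b (c.get k))
    (f : ∀ k : Fin b.length, Tr gen a (b.get k)),
    subst gen (subst gen t g) f = subst gen t (fun k => subst gen (g k) f) := by
  intro s t
  induction t with
  | proj k => intro g f; rfl
  | node φ i args ih =>
    intro g f
    simp only [subst]
    congr 1
    funext j
    exact ih j g f

/-- The objects of the completion `C'`: tuples of sorts. -/
def CP (_gen : List S → List S → Type) : Type := List S

/-- The completion `C'` of the free semi-theory: morphisms into a tuple are tuples
of labeled trees, and composition is given by grafting. -/
instance : Category.{0} (CP gen) where
  Hom a b := ∀ i : Fin (List.length (b : List S)),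
    Tr gen (a : List S) (List.get (b : List S) i)
  id a := fun i => Tr.proj (dom := (a : List S)) i
  comp f g := fun i => subst gen (g i) f
  id_comp f := by funext i; exact subst_proj gen (f i)
  comp_id f := by funext i; rfl
  assoc f g h := by funext i; exact (subst_subst gen (h i) g f).symm

/-- The projection `p^s_i` of `C'`: the one-edge tree labeled by the projection. -/
def CPproj (l : List S) (k : Fin l.length) :
    ((show CP gen from l) ⟶ (show CP gen from [l.get k])) := fun i =>
  (show List.get l k = List.get [l.get k] i by simp [List.getElem_cons_zero]) ▸
    Tr.proj (dom := l) k

namespace CP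

variable {gen}

theorem hom_singleton_ext {a : CP gen} {s : S} {f g : a ⟶ (show CP gen from [s])}
    (h : f ⟨0, by simp⟩ = g ⟨0, by simp⟩) : f = g := by
  funext i
  match i with
  | ⟨0, _⟩ => exact h

theorem comp_CPproj_apply {a : CP gen} (l : List S) (f : a ⟶ (show CP gen from l))
    (k : Fin l.length) : (f ≫ CPproj gen l k) ⟨0, by simp⟩ = f k :=
  rfl

end CP

/-- `C'` is an `S`-sorted algebraic theory: each `c_s` is the categorical product
of the singleton-sort objects `c_{s₁}, …, c_{sₙ}` with the one-edge projection
trees as projections. -/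
theorem CP_isProduct (l : List S) :
    Nonempty (IsLimit (Fan.mk (show CP gen from l) (fun k => CPproj gen l k))) :=
  ⟨Fan.IsLimit.mk _ (fun c k => c.proj k ⟨0, by simp⟩)
    (fun c k => CP.hom_singleton_ext (CP.comp_CPproj_apply l _ k))
    (fun c m hm => funext fun k => (CP.comp_CPproj_apply l m k).symm.trans
      (congrFun (hm k) ⟨0, by simp⟩))⟩
end
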